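/- Let A : ℝ → Matrix (Fin n) (Fin n) ℝ, B : ℝ → Matrix (Fin m) (Fin m) ℝ, P : ℝ → Matrix (Fin n) (Fin m) ℝ be continuous on [0, b], and let C be a constant n × m real matrix. Then U(x) := ℰ(A)(x) · ( ∫_0^x ℱ(−A)(t) · P(t) · ℰ(−B)(t) dt + C ) · ℱ(B)(x) is differentiable on (0, b) and solves the Sylvester-type linear matrix ODE d/dx U(x) = A(x) · U(x) + U(x) · B(x) + P(x), with U(0) = C. -/

import Mathlib

open MeasureTheory Matrix

/- Matrices are equipped with the elementwise sup norm. -/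
attribute [local instance] Matrix.normedAddCommGroup Matrix.normedSpace

/-- Terms of the left integral series: `E_0(x) = 1`, `E_{k+1}(x) = ∫_0^x X(t) * E_k(t) dt`. -/
noncomputable def lterm {ι : Type*} [Fintype ι] [DecidableEq ι]
    (X : ℝ → Matrix ι ι ℝ) : ℕ → ℝ → Matrix ι ι ℝ
  | 0, _ => 1
  | k + 1, x => ∫ t in (0:ℝ)..x, X t * lterm X k t

/-- The left integral series `ℰ(X)(x) = ∑_{k=0}^∞ E_k(x)`. -/
noncomputable def ES {ι : Type*} [Fintype ι] [DecidableEq ι]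
    (X : ℝ → Matrix ι ι ℝ) (x : ℝ) : Matrix ι ι ℝ := ∑' k, lterm X k x

/-- Terms of the right integral series: `F_0(x) = 1`, `F_{k+1}(x) = ∫_0^x F_k(t) * X(t) dt`. -/
noncomputable def rterm {ι : Type*} [Fintype ι] [DecidableEq ι]
    (X : ℝ → Matrix ι ι ℝ) : ℕ → ℝ → Matrix ι ι ℝ
  | 0, _ => 1
  | k + 1, x => ∫ t in (0:ℝ)..x, rterm X k t * X t

/-- The right integral series `ℱ(X)(x) = ∑_{k=0}^∞ F_k(x)`. -/
noncomputable def FS {ι : Type*} [Fintype ι] [DecidableEq ι]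
    (X : ℝ → Matrix ι ι ℝ) (x : ℝ) : Matrix ι ι ℝ := ∑' k, rterm X k x

/-!
`ℰ(X)` and `ℱ(X)` are the Picard series of `Y' = X Y` and `Y' = Y X` with `Y(0) = 1`. With `M`
a bound for `‖X‖`, the Picard bound `‖E_k(x)‖ ≤ (card ι · M · x)^k / k!` (the factor `card ι`
because the entrywise sup norm is not submultiplicative) gives normal convergence of the series
and of its termwise derivatives, so `ℰ(X)' = X ℰ(X)`; since `ℱ(X) = ℰ(Xᵀ)ᵀ`, also
`ℱ(X)' = ℱ(X) X`. Hence `ℱ(-X) ℰ(X)` has derivative `0` and equals `1` at `0`, so `ℱ(-X)`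
inverts `ℰ(X)`. The product rule applied to `U = ℰ(A) (∫ ⋯ + C) ℱ(B)` then gives
`U' = A U + U B + ℰ(A) ℱ(-A) P ℰ(-B) ℱ(B) = A U + U B + P` (variation of constants).
-/

open Set

section MatrixAnalysis

variable {ι κ ν : Type*} [Fintype ι] [Fintype κ] [Fintype ν]

theorem Matrix.norm_mul_le_card_mul (A : Matrix ι κ ℝ) (B : Matrix κ ν ℝ) :
    ‖A * B‖ ≤ Fintype.card κ * ‖A‖ * ‖B‖ := by
  refine (Matrix.norm_le_iff (by positivity)).2 fun i j => ?_
  calc ‖(A * B) i j‖ ≤ ∑ k, ‖A i k‖ * ‖B k j‖ := by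
        simpa only [Matrix.mul_apply, norm_mul] using norm_sum_le Finset.univ fun k => A i k * B k j
    _ ≤ ∑ _k : κ, ‖A‖ * ‖B‖ := by
        gcongr <;> exact Matrix.norm_entry_le_entrywise_sup_norm _
    _ = Fintype.card κ * ‖A‖ * ‖B‖ := by simp [mul_assoc]

theorem Matrix.norm_one_le [DecidableEq ι] : ‖(1 : Matrix ι ι ℝ)‖ ≤ 1 :=
  (Matrix.norm_diagonal _).trans_le <|
    (pi_norm_const_le (1 : ℝ) : ‖fun _ : ι => (1 : ℝ)‖ ≤ ‖(1 : ℝ)‖).trans_eq norm_one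

omit [Fintype ι] [Fintype ν] in
theorem ContinuousOn.matrix_mul {f : ℝ → Matrix ι κ ℝ} {g : ℝ → Matrix κ ν ℝ} {s : Set ℝ}
    (hf : ContinuousOn f s) (hg : ContinuousOn g s) : ContinuousOn (fun t => f t * g t) s :=
  (continuous_fst.matrix_mul continuous_snd).comp_continuousOn (hf.prodMk hg)

omit [Fintype ι] [Fintype κ] [Fintype ν] in
theorem ContinuousOn.matrix_transpose {f : ℝ → Matrix ι κ ℝ} {s : Set ℝ}
    (hf : ContinuousOn f s) : ContinuousOn (fun t => (f t)ᵀ) s :=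
  continuous_id.matrix_transpose.comp_continuousOn hf

omit [Fintype ι] in
theorem HasDerivAt.matrix_mul {f : ℝ → Matrix ι κ ℝ} {g : ℝ → Matrix κ ν ℝ}
    {f' : Matrix ι κ ℝ} {g' : Matrix κ ν ℝ} {x : ℝ}
    (hf : HasDerivAt f f' x) (hg : HasDerivAt g g' x) :
    HasDerivAt (fun t => f t * g t) (f' * g x + f x * g') x := by
  have hf_entry (i : ι) (k : κ) : HasDerivAt (fun t => f t i k) (f' i k) x :=
    hasDerivAt_pi.1 (hasDerivAt_pi.1 hf i) k
  have hg_entry (k : κ) (j : ν) : HasDerivAt (fun t => g t k j) (g' k j) x :=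
    hasDerivAt_pi.1 (hasDerivAt_pi.1 hg k) j
  refine hasDerivAt_pi.2 fun i => hasDerivAt_pi.2 fun j => ?_
  simpa only [Matrix.mul_apply, Matrix.add_apply, ← Finset.sum_add_distrib] using
    HasDerivAt.fun_sum fun k _ => (hf_entry i k).fun_mul (hg_entry k j)

noncomputable def Matrix.transposeLinearIsometryEquiv : Matrix ι κ ℝ ≃ₗᵢ[ℝ] Matrix κ ι ℝ :=
  { Matrix.transposeLinearEquiv ι κ ℝ ℝ with norm_map' := Matrix.norm_transpose }

theorem intervalIntegral.integral_matrix_transpose (f : ℝ → Matrix ι κ ℝ) (a b : ℝ) :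
    ∫ t in a..b, (f t)ᵀ = (∫ t in a..b, f t)ᵀ :=
  Matrix.transposeLinearIsometryEquiv.toLinearIsometry.intervalIntegral_comp_comm f

theorem HasDerivAt.matrix_transpose {f : ℝ → Matrix ι κ ℝ} {f' : Matrix ι κ ℝ} {x : ℝ}
    (hf : HasDerivAt f f' x) : HasDerivAt (fun t => (f t)ᵀ) f'ᵀ x :=
  hasDerivAt_pi.2 fun j => hasDerivAt_pi.2 fun i => hasDerivAt_pi.1 (hasDerivAt_pi.1 hf i) j

end MatrixAnalysis

theorem ContinuousOn.hasDerivAt_integral {E : Type*} [NormedAddCommGroup E] [NormedSpace ℝ E]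
    [CompleteSpace E] {f : ℝ → E} {a b x : ℝ} (hf : ContinuousOn f (Icc a b))
    (hx : x ∈ Ioo a b) : HasDerivAt (fun y => ∫ t in a..y, f t) (f x) x :=
  intervalIntegral.integral_hasDerivAt_right
    ((hf.mono (uIcc_of_le hx.1.le ▸ Icc_subset_Icc_right hx.2.le)).intervalIntegrable)
    ((hf.mono Ioo_subset_Icc_self).stronglyMeasurableAtFilter isOpen_Ioo x hx)
    (hf.continuousAt (Icc_mem_nhds hx.1 hx.2))

theorem ContinuousOn.eq_of_hasDerivAt_eq_zero {E : Type*} [NormedAddCommGroup E]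
    [NormedSpace ℝ E] {f : ℝ → E} {a b : ℝ} (hf : ContinuousOn f (Icc a b))
    (hf' : ∀ x ∈ Ioo a b, HasDerivAt f 0 x) : ∀ x ∈ Icc a b, f x = f a := by
  rcases le_or_gt b a with hba | hab
  · intro x hx
    rw [le_antisymm (hx.2.trans hba) hx.1]
  have hc : (a + b) / 2 ∈ Ioo a b := ⟨by linarith, by linarith⟩
  have hIoo : EqOn f (fun _ => f ((a + b) / 2)) (Ioo a b) := fun x hx =>
    isOpen_Ioo.is_const_of_deriv_eq_zero isPreconnected_Ioo
      (fun y hy => (hf' y hy).differentiableAt.differentiableWithinAt)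
      (fun y hy => (hf' y hy).deriv) hx hc
  have hIcc := hIoo.of_subset_closure hf continuousOn_const Ioo_subset_Icc_self
    (closure_Ioo hab.ne).symm.subset
  intro x hx
  rw [hIcc hx, hIcc (left_mem_Icc.2 hab.le)]

section IntegralSeries

variable {ι : Type*} [Fintype ι] [DecidableEq ι] {X : ℝ → Matrix ι ι ℝ} {r : ℝ}

theorem lterm_succ (X : ℝ → Matrix ι ι ℝ) (k : ℕ) :
    lterm X (k + 1) = fun x => ∫ t in (0:ℝ)..x, X t * lterm X k t :=
  rfl

theorem continuousOn_lterm (hX : ContinuousOn X (Icc 0 r)) (k : ℕ) :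
    ContinuousOn (lterm X k) (Icc 0 r) := by
  rcases lt_or_ge r 0 with hr | hr
  · simp [Icc_eq_empty_of_lt hr]
  induction k with
  | zero => exact continuousOn_const
  | succ k ih =>
    rw [lterm_succ, ← uIcc_of_le hr]
    refine intervalIntegral.continuousOn_primitive_interval' ?_ left_mem_uIcc
    exact (hX.matrix_mul ih).intervalIntegrable_of_Icc hr

theorem hasDerivAt_lterm_succ (hX : ContinuousOn X (Icc 0 r)) (k : ℕ) {x : ℝ}
    (hx : x ∈ Ioo 0 r) : HasDerivAt (lterm X (k + 1)) (X x * lterm X k x) x :=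
  (hX.matrix_mul (continuousOn_lterm hX k)).hasDerivAt_integral hx

theorem integral_mul_pow_div_factorial (c x : ℝ) (k : ℕ) :
    ∫ t in (0:ℝ)..x, c * ((c * t) ^ k / k.factorial) = (c * x) ^ (k + 1) / (k + 1).factorial := by
  simp only [mul_pow, intervalIntegral.integral_const_mul, intervalIntegral.integral_div,
    integral_pow, Nat.factorial_succ]
  push_cast
  field_simp
  ring

theorem norm_lterm_le {M : ℝ} (hXM : ∀ t ∈ Icc 0 r, ‖X t‖ ≤ M) (k : ℕ) :
    ∀ x ∈ Icc 0 r, ‖lterm X k x‖ ≤ (Fintype.card ι * M * x) ^ k / k.factorial := by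
  induction k with
  | zero => intro x _; simpa [lterm] using Matrix.norm_one_le (ι := ι)
  | succ k ih =>
    intro x hx
    rw [lterm_succ, ← integral_mul_pow_div_factorial]
    refine intervalIntegral.norm_integral_le_of_norm_le hx.1 (ae_of_all _ fun t ht => ?_)
      (Continuous.intervalIntegrable (by fun_prop) _ _)
    have ht : t ∈ Icc 0 r := ⟨ht.1.le, ht.2.trans hx.2⟩
    have hM : 0 ≤ M := (norm_nonneg _).trans (hXM t ht)
    calc ‖X t * lterm X k t‖ ≤ Fintype.card ι * ‖X t‖ * ‖lterm X k t‖ :=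
          Matrix.norm_mul_le_card_mul _ _
      _ ≤ Fintype.card ι * M * ((Fintype.card ι * M * t) ^ k / k.factorial) := by
          gcongr
          · exact hXM t ht
          · exact ih t ht

theorem norm_lterm_le_uniform {M : ℝ} (hXM : ∀ t ∈ Icc 0 r, ‖X t‖ ≤ M) (k : ℕ) {x : ℝ}
    (hx : x ∈ Icc 0 r) : ‖lterm X k x‖ ≤ (Fintype.card ι * M * r) ^ k / k.factorial := by
  have hM : 0 ≤ M := (norm_nonneg _).trans (hXM x hx)
  refine (norm_lterm_le hXM k x hx).trans ?_
  gcongr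
  · exact mul_nonneg (by positivity) hx.1
  · exact hx.2

theorem continuousOn_ES (hX : ContinuousOn X (Icc 0 r)) : ContinuousOn (ES X) (Icc 0 r) := by
  obtain ⟨M, hXM⟩ := isCompact_Icc.exists_bound_of_continuousOn hX
  exact continuousOn_tsum (continuousOn_lterm hX) (Real.summable_pow_div_factorial _)
    fun k _ hx => norm_lterm_le_uniform hXM k hx

theorem ES_zero (X : ℝ → Matrix ι ι ℝ) : ES X 0 = 1 := by
  rw [ES, tsum_eq_single 0]
  · rfl
  · rintro (_ | k) hk
    · exact absurd rfl hk
    · exact intervalIntegral.integral_same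

theorem hasDerivAt_ES (hX : ContinuousOn X (Icc 0 r)) {x : ℝ} (hx : x ∈ Ioo 0 r) :
    HasDerivAt (ES X) (X x * ES X x) x := by
  obtain ⟨M, hXM⟩ := isCompact_Icc.exists_bound_of_continuousOn hX
  have hsum (y : ℝ) (hy : y ∈ Icc 0 r) : Summable fun k => lterm X k y :=
    .of_norm_bounded (Real.summable_pow_div_factorial _)
      fun k => norm_lterm_le_uniform hXM k hy
  have hbound (k : ℕ) (y : ℝ) (hy : y ∈ Ioo 0 r) :
      ‖X y * lterm X k y‖ ≤
        Fintype.card ι * M * ((Fintype.card ι * M * r) ^ k / k.factorial) := by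
    have hy : y ∈ Icc 0 r := Ioo_subset_Icc_self hy
    have hM : 0 ≤ M := (norm_nonneg _).trans (hXM y hy)
    calc ‖X y * lterm X k y‖ ≤ Fintype.card ι * ‖X y‖ * ‖lterm X k y‖ :=
          Matrix.norm_mul_le_card_mul _ _
      _ ≤ Fintype.card ι * M * ((Fintype.card ι * M * r) ^ k / k.factorial) := by
          gcongr
          · exact hXM y hy
          · exact norm_lterm_le_uniform hXM k hy
  have htail : HasDerivAt (fun y => ∑' k, lterm X (k + 1) y) (∑' k, X x * lterm X k x) x :=
    hasDerivAt_tsum_of_isPreconnected ((Real.summable_pow_div_factorial _).mul_left _)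
      isOpen_Ioo isPreconnected_Ioo (fun k _ hy => hasDerivAt_lterm_succ hX k hy) hbound hx
      ((summable_nat_add_iff 1).2 (hsum x (Ioo_subset_Icc_self hx))) hx
  have hES : ES X =ᶠ[nhds x] fun y => 1 + ∑' k, lterm X (k + 1) y := by
    filter_upwards [isOpen_Ioo.mem_nhds hx] with y hy
    exact (hsum y (Ioo_subset_Icc_self hy)).tsum_eq_zero_add
  rw [ES, ← (hsum x (Ioo_subset_Icc_self hx)).tsum_mul_left]
  exact (htail.const_add 1).congr_of_eventuallyEq hES

theorem rterm_eq_transpose_lterm (X : ℝ → Matrix ι ι ℝ) (k : ℕ) (x : ℝ) :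
    rterm X k x = (lterm (fun t => (X t)ᵀ) k x)ᵀ := by
  induction k generalizing x with
  | zero => exact Matrix.transpose_one.symm
  | succ k ih =>
    simp only [rterm, lterm_succ, ← intervalIntegral.integral_matrix_transpose,
      Matrix.transpose_mul, Matrix.transpose_transpose, ih]

theorem FS_eq_transpose_ES (X : ℝ → Matrix ι ι ℝ) (x : ℝ) :
    FS X x = (ES (fun t => (X t)ᵀ) x)ᵀ := by
  simp only [FS, ES, rterm_eq_transpose_lterm, Matrix.transpose_tsum]

theorem FS_zero (X : ℝ → Matrix ι ι ℝ) : FS X 0 = 1 := by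
  rw [FS_eq_transpose_ES, ES_zero, Matrix.transpose_one]

theorem continuousOn_FS (hX : ContinuousOn X (Icc 0 r)) : ContinuousOn (FS X) (Icc 0 r) := by
  simp only [funext (FS_eq_transpose_ES X)]
  exact (continuousOn_ES hX.matrix_transpose).matrix_transpose

theorem hasDerivAt_FS (hX : ContinuousOn X (Icc 0 r)) {x : ℝ} (hx : x ∈ Ioo 0 r) :
    HasDerivAt (FS X) (FS X x * X x) x := by
  have h := (hasDerivAt_ES hX.matrix_transpose hx).matrix_transpose
  simp only [Matrix.transpose_mul, Matrix.transpose_transpose] at h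
  simpa only [funext (FS_eq_transpose_ES X)] using h

theorem FS_neg_mul_ES (hX : ContinuousOn X (Icc 0 r)) {x : ℝ} (hx : x ∈ Icc 0 r) :
    FS (fun s => -X s) x * ES X x = 1 := by
  have hW := ContinuousOn.eq_of_hasDerivAt_eq_zero
    ((continuousOn_FS hX.fun_neg).matrix_mul (continuousOn_ES hX))
    (fun y hy => ((hasDerivAt_FS hX.fun_neg hy).matrix_mul (hasDerivAt_ES hX hy)).congr_deriv
      (by rw [Matrix.mul_neg, Matrix.neg_mul, Matrix.mul_assoc, neg_add_cancel]))
    x hx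
  rwa [FS_zero, ES_zero, Matrix.mul_one] at hW

theorem ES_mul_FS_neg (hX : ContinuousOn X (Icc 0 r)) {x : ℝ} (hx : x ∈ Icc 0 r) :
    ES X x * FS (fun s => -X s) x = 1 :=
  mul_eq_one_comm.1 (FS_neg_mul_ES hX hx)

theorem ES_neg_mul_FS (hX : ContinuousOn X (Icc 0 r)) {x : ℝ} (hx : x ∈ Icc 0 r) :
    ES (fun s => -X s) x * FS X x = 1 :=
  mul_eq_one_comm.1 (by simpa only [neg_neg] using FS_neg_mul_ES hX.fun_neg hx)

end IntegralSeries

/-- `U(x) = ℰ(A)(x)·(∫_0^x ℱ(−A)(t)·P(t)·ℰ(−B)(t) dt + C)·ℱ(B)(x)` solves the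
Sylvester-type ODE `U' = A·U + U·B + P`, `U 0 = C`. -/
theorem sylvester_ODE_solution {n m : ℕ} (b : ℝ)
    (A : ℝ → Matrix (Fin n) (Fin n) ℝ) (B : ℝ → Matrix (Fin m) (Fin m) ℝ)
    (P : ℝ → Matrix (Fin n) (Fin m) ℝ) (C : Matrix (Fin n) (Fin m) ℝ)
    (hA : ContinuousOn A (Set.Icc 0 b)) (hB : ContinuousOn B (Set.Icc 0 b))
    (hP : ContinuousOn P (Set.Icc 0 b))
    (U : ℝ → Matrix (Fin n) (Fin m) ℝ)
    (hU : ∀ x, U x = ES A x *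
      ((∫ t in (0:ℝ)..x, FS (fun s => -A s) t * P t * ES (fun s => -B s) t) + C) * FS B x) :
    (∀ x ∈ Set.Ioo (0:ℝ) b, HasDerivAt U (A x * U x + U x * B x + P x) x) ∧ U 0 = C := by
  refine ⟨fun x hx => ?_, by simp [hU, ES_zero, FS_zero]⟩
  have hxI : x ∈ Icc 0 b := Ioo_subset_Icc_self hx
  have hg := (((continuousOn_FS hA.fun_neg).matrix_mul hP).matrix_mul
    (continuousOn_ES hB.fun_neg)).hasDerivAt_integral hx
  have hP_eq : ES A x * (FS (fun s => -A s) x * (P x * (ES (fun s => -B s) x * FS B x))) = P x := by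
    rw [ES_neg_mul_FS hB hxI, Matrix.mul_one, ← Matrix.mul_assoc, ES_mul_FS_neg hA hxI,
      Matrix.one_mul]
  have hD := ((hasDerivAt_ES hA hx).matrix_mul (hg.add_const C)).matrix_mul (hasDerivAt_FS hB hx)
  rw [← funext hU] at hD
  convert hD using 1
  rw [hU x]
  simp only [Matrix.add_mul, Matrix.mul_add, Matrix.mul_assoc, hP_eq]
  abel
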